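/- arXiv:1503.06223 — 4 statements merged into one kernel-verified Lean document; each statement's English description precedes it below -/
import Mathlib

section
/- Let k be a nonzero complex number, h > 0, and τ a complex number. The 3×3 matrix A with diagonal entries A₁₁ = A₂₂ = (2√3+6)h²τ + i k h³, A₃₃ = 4h²τ + i k h³ and off-diagonal entries all equal to -√3 h²τ, scaled by 1/6, is singular when (3√3+6)τ = -i k h. -/
open Complex Matrix

/-- The E-block of the lowest-order HDG element matrix on the reference tetrahedron of
size `h` (scaled by `1/6`) is singular when `(3√3+6)τ = -ikh`. -/
theorem hdg_tet_Eblock_singular (k : ℂ) (hk : k ≠ 0) (h : ℝ) (hh : 0 < h) (τ : ℂ)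
    (hτ : (3 * (Real.sqrt 3 : ℂ) + 6) * τ = -(I * k * h)) :
    ((1 / 6 : ℂ) •
      !![(2 * (Real.sqrt 3 : ℂ) + 6) * (h : ℂ) ^ 2 * τ + I * k * (h : ℂ) ^ 3,
          -(Real.sqrt 3 : ℂ) * (h : ℂ) ^ 2 * τ, -(Real.sqrt 3 : ℂ) * (h : ℂ) ^ 2 * τ;
         -(Real.sqrt 3 : ℂ) * (h : ℂ) ^ 2 * τ,
          (2 * (Real.sqrt 3 : ℂ) + 6) * (h : ℂ) ^ 2 * τ + I * k * (h : ℂ) ^ 3,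
          -(Real.sqrt 3 : ℂ) * (h : ℂ) ^ 2 * τ;
         -(Real.sqrt 3 : ℂ) * (h : ℂ) ^ 2 * τ, -(Real.sqrt 3 : ℂ) * (h : ℂ) ^ 2 * τ,
          4 * (h : ℂ) ^ 2 * τ + I * k * (h : ℂ) ^ 3]).det = 0 := by
  have hik : I * k * (h : ℂ) ^ 3 = -((3 * (Real.sqrt 3 : ℂ) + 6) * τ) * (h : ℂ) ^ 2 := by
    linear_combination ((h:ℂ)^2) * hτ
  rw [hik]
  simp [Matrix.det_fin_three, Matrix.smul_apply]
  ring
end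

section
/- Fix τ ∈ ℂ with τ ≠ 0. Define, for small real x > 0, K(x) = arccos(1 - x²/(2 + i x(τ + τ⁻¹))) (principal branch). Then K(x) - x = -((τ² + 1)i/(4τ))·x² + O(x³) as x → 0⁺. -/
open Complex Filter Topology Asymptotics

lemma log1p_bound {z : ℂ} (hz : ‖z‖ ≤ 1/2) : ‖Complex.log (1+z) - z‖ ≤ ‖z‖^2 := by
  have h1 : ‖z‖ < 1 := lt_of_le_of_lt hz (by norm_num)
  refine (Complex.norm_log_one_add_sub_self_le h1).trans ?_
  have h2 : (1 - ‖z‖)⁻¹ ≤ 2 := by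
    rw [show (2:ℝ) = (2⁻¹)⁻¹ by norm_num]
    exact inv_anti₀ (by norm_num) (by linarith)
  have h3 : (0:ℝ) ≤ ‖z‖^2 := sq_nonneg _
  nlinarith

lemma exp_taylor2 {z : ℂ} (hz : ‖z‖ ≤ 1) : ‖Complex.exp z - 1 - z‖ ≤ ‖z‖^2 := by
  have h := Complex.exp_bound (x := z) (by exact hz) (by norm_num : 0 < 2)
  norm_num [Finset.sum_range_succ, Nat.factorial] at h
  have he : Complex.exp z - 1 - z = Complex.exp z - (1 + z) := by ring
  rw [he]
  have h3 : (0:ℝ) ≤ ‖z‖ ^ 2 := sq_nonneg _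
  nlinarith [h]

lemma exp_taylor3 {z : ℂ} (hz : ‖z‖ ≤ 1) : ‖Complex.exp z - (1 + z + z^2/2)‖ ≤ ‖z‖^3 := by
  have h := Complex.exp_bound (x := z) (by exact hz) (by norm_num : 0 < 3)
  norm_num [Finset.sum_range_succ, Nat.factorial] at h
  have h3 : (0:ℝ) ≤ ‖z‖ ^ 3 := by positivity
  nlinarith [h]

lemma cpow_sq_mul {x : ℝ} (hx : 0 < x) {v : ℂ} (hv : v ≠ 0) :
    ((x:ℂ)^2 * v) ^ ((1:ℂ)/2) = x * v ^ ((1:ℂ)/2) := by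
  have hx2 : ((x:ℂ)^2) = ((x^2 : ℝ):ℂ) := by push_cast; ring
  have hx2ne : ((x^2 : ℝ):ℂ) ≠ 0 := by
    simp only [ne_eq, Complex.ofReal_eq_zero]
    positivity
  rw [hx2, Complex.cpow_def_of_ne_zero (mul_ne_zero hx2ne hv),
    Complex.log_ofReal_mul (by positivity) hv]
  have hlog : Real.log (x^2) = 2 * Real.log x := by
    rw [Real.log_pow]; push_cast; ring
  rw [hlog]
  have : ((↑(2 * Real.log x) : ℂ) + Complex.log v) * (1/2)
      = (Real.log x : ℂ) + Complex.log v * (1/2) := by push_cast; ring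
  rw [this, Complex.exp_add, ← Complex.ofReal_exp, Real.exp_log hx,
    ← Complex.cpow_def_of_ne_zero hv]

/-- Principal branch of the complex arccosine, `arccos z = -i log(z + i√(1-z²))`. -/
noncomputable def carccos (z : ℂ) : ℂ :=
  -I * Complex.log (z + I * (1 - z ^ 2) ^ ((1 : ℂ) / 2))

/-- Asymptotic expansion of the 1D lowest-order HDG dispersion relation: with
`K(x) = arccos(1 - x²/(2 + ix(τ + τ⁻¹)))`, one has
`K(x) - x = -((τ²+1)i/(4τ))·x² + O(x³)` as `x → 0⁺`. -/
theorem hdg_1d_dispersion_asymptotics (τ : ℂ) (hτ : τ ≠ 0) :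
    (fun x : ℝ =>
        carccos (1 - (x : ℂ) ^ 2 / (2 + I * x * (τ + τ⁻¹))) - x
          + ((τ ^ 2 + 1) * I / (4 * τ)) * (x : ℂ) ^ 2)
      =O[𝓝[>] (0 : ℝ)] fun x : ℝ => x ^ 3 := by
  set l : Filter ℝ := 𝓝[>] (0:ℝ) with hl
  set c : ℂ := τ + τ⁻¹ with hc
  have hA : (τ ^ 2 + 1) * I / (4 * τ) = I * c / 4 := by
    rw [hc]; field_simp
  -- basic limits
  have tx : Tendsto (fun x : ℝ => x) l (𝓝 0) := by
    exact tendsto_id.mono_right (nhdsWithin_le_nhds (a := (0:ℝ)))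
  have tX : Tendsto (fun x : ℝ => (x:ℂ)) l (𝓝 0) := by
    have := (Complex.continuous_ofReal.tendsto (0:ℝ)).comp tx
    exact this
  have hxpos : ∀ᶠ x in l, 0 < x := eventually_mem_nhdsWithin
  have hx1 : ∀ᶠ x in l, |x| ≤ 1 := by
    have := tx.abs
    simp only [abs_zero] at this
    exact this.eventually (eventually_le_nhds one_pos)
  -- basic big-O facts
  have oX : (fun x : ℝ => (x:ℂ)) =O[l] (fun x => x) :=
    isBigO_of_le _ (fun x => by simp)
  have oconst : ∀ a : ℂ, (fun _ : ℝ => a) =O[l] (fun _ => (1:ℝ)) := by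
    intro a
    exact isBigO_of_le' (c := ‖a‖) _ (fun x => by simp)
  have oxpow : ∀ n : ℕ, (fun x : ℝ => x^(n+1)) =O[l] (fun x => x^n) := by
    intro n
    refine IsBigO.of_bound 1 ?_
    filter_upwards [hx1] with x hx
    simp only [norm_pow, Real.norm_eq_abs, one_mul]
    exact pow_le_pow_of_le_one (abs_nonneg x) hx (Nat.le_succ n)
  have osmall : ∀ a : ℂ, (fun x : ℝ => a * (x:ℂ)) =O[l] (fun x => x) := by
    intro a
    exact ((oconst a).mul oX).congr (fun x => rfl) (fun x => one_mul x)
  -- denominator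
  set d : ℝ → ℂ := fun x => 2 + I * x * c with hdd
  have td : Tendsto d l (𝓝 2) := by
    have : Tendsto (fun x:ℝ => 2 + I * (x:ℂ) * c) l (𝓝 (2 + I * 0 * c)) :=
      tendsto_const_nhds.add ((tX.const_mul I).mul_const c)
    simpa using this
  have hd0 : ∀ᶠ x in l, d x ≠ 0 := td.eventually_ne two_ne_zero
  have oinvd : (fun x => (d x)⁻¹) =O[l] (fun _ => (1:ℝ)) :=
    (td.inv₀ two_ne_zero).isBigO_one ℝ
  have oinv2d : (fun x => (2 * d x)⁻¹) =O[l] (fun _ => (1:ℝ)) := by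
    have : Tendsto (fun x => 2 * d x) l (𝓝 (2 * 2)) := td.const_mul 2
    exact (this.inv₀ (by norm_num)).isBigO_one ℝ
  -- u, q
  set u : ℝ → ℂ := fun x => (x:ℂ)^2 / d x with hu
  have ou : u =O[l] (fun x => x^2) := by
    have h1 : (fun x : ℝ => (x:ℂ)^2 * (d x)⁻¹) =O[l] (fun x => x^2 * 1) :=
      (oX.pow 2).mul oinvd
    exact h1.congr (fun x => by rw [hu]; exact (div_eq_mul_inv _ _).symm)
      (fun x => mul_one _)
  set q : ℝ → ℂ := fun x => (2 - u x) / d x - 1 with hq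
  have oq2 : (fun x => q x + I * x * c / 2) =O[l] (fun x => x^2) := by
    have heq : ∀ᶠ (x : ℝ) in l,
        ((-2) * u x + (Complex.I)^2 * (x:ℂ)^2 * c^2) * (2 * d x)⁻¹ = q x + I * (x:ℂ) * c / 2 := by
      filter_upwards [hd0] with x hx
      have h2d : (2:ℂ) * d x ≠ 0 := mul_ne_zero two_ne_zero hx
      have hqd : (q x + 1) * d x = 2 - u x := by
        simp only [hq, sub_add_cancel]
        exact div_mul_cancel₀ _ hx
      have hdx : d x = 2 + I * x * c := by simp only [hdd]
      rw [← div_eq_mul_inv, div_eq_iff h2d]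
      linear_combination (-2:ℂ) * hqd + (2 - I * (x:ℂ) * c) * hdx
    have num : (fun x => (-2 : ℂ) * u x + (Complex.I)^2 * (x:ℂ)^2 * c^2) =O[l] (fun x => x^2) := by
      refine IsBigO.add (ou.const_mul_left (-2)) ?_
      exact ((oX.pow 2).const_mul_left ((Complex.I)^2 * c^2)).congr (fun x => by ring) (fun x => rfl)
    exact ((num.mul oinv2d).congr' heq (by filter_upwards with x using mul_one _))
  have oq1 : q =O[l] (fun x => x) := by
    have h1 : (fun x => q x + I * x * c / 2) =O[l] (fun x => x) :=
      oq2.trans (by simpa using oxpow 1)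
    have h2 := h1.sub (osmall (I * c / 2))
    exact h2.congr (fun x => by ring) (fun x => rfl)
  have tq0 : Tendsto q l (𝓝 0) := oq1.trans_tendsto tx
  have hq_half : ∀ᶠ x in l, ‖q x‖ ≤ 1/2 := by
    have := tq0.norm
    simp only [norm_zero] at this
    exact this.eventually (eventually_le_nhds (by norm_num))
  have hv0 : ∀ᶠ x in l, 1 + q x ≠ 0 := by
    have tv : Tendsto (fun x => 1 + q x) l (𝓝 1) := by
      simpa using tendsto_const_nhds.add tq0
    exact tv.eventually_ne one_ne_zero
  -- log expansion
  have olog : (fun x => Complex.log (1 + q x) - q x) =O[l] (fun x => x^2) := by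
    have h1 : (fun x => Complex.log (1 + q x) - q x) =O[l] (fun x => q x * q x) := by
      refine IsBigO.of_bound 1 ?_
      filter_upwards [hq_half] with x hx
      rw [one_mul, norm_mul, ← sq]
      exact log1p_bound hx
    exact h1.trans ((oq1.mul oq1).congr (fun x => rfl) (fun x => (sq x).symm))
  -- m' = log(1+q)/2, h = (1+q)^(1/2) = exp m'
  set m' : ℝ → ℂ := fun x => Complex.log (1 + q x) / 2 with hm'
  have om2 : (fun x => m' x + I * x * c / 4) =O[l] (fun x => x^2) := by
    have := (olog.const_mul_left (1/2 : ℂ)).add (oq2.const_mul_left (1/2 : ℂ))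
    exact this.congr (fun x => by rw [hm']; ring) (fun x => rfl)
  have om1 : m' =O[l] (fun x => x) := by
    have h1 : (fun x => m' x + I * x * c / 4) =O[l] (fun x => x) :=
      om2.trans (by simpa using oxpow 1)
    exact (h1.sub (osmall (I * c / 4))).congr (fun x => by ring) (fun x => rfl)
  have tm0 : Tendsto m' l (𝓝 0) := om1.trans_tendsto tx
  have hm1 : ∀ᶠ x in l, ‖m' x‖ ≤ 1 := by
    have := tm0.norm
    simp only [norm_zero] at this
    exact this.eventually (eventually_le_nhds one_pos)
  have oexp : (fun x => Complex.exp (m' x) - 1 - m' x) =O[l] (fun x => x^2) := by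
    have h1 : (fun x => Complex.exp (m' x) - 1 - m' x) =O[l] (fun x => m' x * m' x) := by
      refine IsBigO.of_bound 1 ?_
      filter_upwards [hm1] with x hx
      rw [one_mul, norm_mul, ← sq]
      exact exp_taylor2 hx
    exact h1.trans ((om1.mul om1).congr (fun x => rfl) (fun x => (sq x).symm))
  set h : ℝ → ℂ := fun x => ((2 - u x) / d x) ^ ((1:ℂ)/2) with hh
  have heq_h : ∀ᶠ (x : ℝ) in l, h x = Complex.exp (m' x) := by
    filter_upwards [hv0] with x hx
    have e1 : (2 - u x) / d x = 1 + q x := by simp only [hq]; ring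
    simp only [hh, e1]
    rw [Complex.cpow_def_of_ne_zero hx, hm', mul_one_div]
  have oh : (fun x => h x - 1 + I * x * c / 4) =O[l] (fun x => x^2) := by
    have := oexp.add om2
    refine this.congr' ?_ (by rfl)
    filter_upwards [heq_h] with x hx
    rw [hx]; ring
  -- x^2/2 - u = O(x^3)
  have ouX2 : (fun x => (x:ℂ)^2/2 - u x) =O[l] (fun x => x^3) := by
    have heq : ∀ᶠ (x : ℝ) in l,
        (I * c) * (x:ℂ)^3 * (2 * d x)⁻¹ = (x:ℂ)^2/2 - u x := by
      filter_upwards [hd0] with x hx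
      have h2d : (2:ℂ) * d x ≠ 0 := mul_ne_zero two_ne_zero hx
      have hud : u x * d x = (x:ℂ)^2 := by
        simp only [hu]; exact div_mul_cancel₀ _ hx
      have hdx : d x = 2 + I * x * c := by simp only [hdd]
      rw [← div_eq_mul_inv, div_eq_iff h2d]
      linear_combination (2:ℂ) * hud + (-(x:ℂ)^2) * hdx
    have h1 : (fun x => (I * c) * (x:ℂ)^3 * (2 * d x)⁻¹) =O[l] (fun x => x^3) := by
      have := ((oX.pow 3).const_mul_left (I * c)).mul oinv2d
      exact this.congr (fun x => rfl) (fun x => mul_one _)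
    exact h1.congr' heq (by rfl)
  -- E expansion
  set E : ℝ → ℂ := fun x => 1 - u x + I * x * h x with hE
  set F2 : ℝ → ℂ := fun x => 1 + I * x + (c/4 - 1/2) * (x:ℂ)^2 with hF2
  have oE : (fun x => E x - F2 x) =O[l] (fun x => x^3) := by
    have h2 : (fun x => I * (x:ℂ) * (h x - 1 + I * x * c / 4)) =O[l] (fun x => x^3) := by
      have := (osmall I).mul oh
      exact this.congr (fun x => rfl) (fun x => by ring)
    have := ouX2.add h2
    refine this.congr (fun x => ?_) (fun x => rfl)
    simp only [hE, hF2]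
    linear_combination ((x:ℂ)^2 * c / 4) * Complex.I_sq
  -- P expansion
  set m₂ : ℝ → ℂ := fun x => I * ((x:ℂ) - (I * c / 4) * (x:ℂ)^2) with hm₂
  set P : ℝ → ℂ := fun x => Complex.exp (m₂ x) with hP
  have om₂1 : m₂ =O[l] (fun x => x) := by
    have hb : (fun x : ℝ => (c/4) * (x:ℂ)^2) =O[l] (fun x => x) :=
      (((oX.pow 2).const_mul_left (c/4)).trans (by simpa using oxpow 1))
    have := (osmall I).add hb
    refine this.congr (fun x => ?_) (fun x => rfl)
    simp only [hm₂]
    linear_combination ((x:ℂ)^2 * c / 4) * Complex.I_sq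
  have tm₂0 : Tendsto m₂ l (𝓝 0) := om₂1.trans_tendsto tx
  have hm₂1 : ∀ᶠ x in l, ‖m₂ x‖ ≤ 1 := by
    have := tm₂0.norm
    simp only [norm_zero] at this
    exact this.eventually (eventually_le_nhds one_pos)
  have oexp3 : (fun x => Complex.exp (m₂ x) - (1 + m₂ x + (m₂ x)^2/2)) =O[l]
      (fun x => x^3) := by
    have h1 : (fun x => Complex.exp (m₂ x) - (1 + m₂ x + (m₂ x)^2/2)) =O[l]
        (fun x => m₂ x * m₂ x * m₂ x) := by
      refine IsBigO.of_bound 1 ?_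
      filter_upwards [hm₂1] with x hx
      rw [one_mul, norm_mul, norm_mul]
      calc ‖Complex.exp (m₂ x) - (1 + m₂ x + (m₂ x)^2/2)‖ ≤ ‖m₂ x‖^3 := exp_taylor3 hx
        _ = ‖m₂ x‖ * ‖m₂ x‖ * ‖m₂ x‖ := by ring
    exact h1.trans (((om₂1.mul om₂1).mul om₂1).congr (fun x => rfl) (fun x => by ring))
  have oP : (fun x => P x - F2 x) =O[l] (fun x => x^3) := by
    have h2 : (fun x : ℝ => (I*c/4) * (x:ℂ)^3 + (c^2/32) * (x:ℂ)^4) =O[l]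
        (fun x => x^3) := by
      refine IsBigO.add ((oX.pow 3).const_mul_left (I*c/4)) ?_
      exact ((oX.pow 4).const_mul_left (c^2/32)).trans (by simpa using oxpow 3)
    have := oexp3.add h2
    refine this.congr (fun x => ?_) (fun x => rfl)
    simp only [hP, hm₂, hF2]
    linear_combination ((c/4 - 1/2) * (x:ℂ)^2 + (c/4) * (x:ℂ)^3 * I
      + (c^2/32) * (x:ℂ)^4 * (1 - (Complex.I)^2)) * Complex.I_sq
  have oEP : (fun x => E x - P x) =O[l] (fun x => x^3) :=
    (oE.sub oP).congr (fun x => by ring) (fun x => rfl)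
  -- r
  set r : ℝ → ℂ := fun x => E x / P x - 1 with hr
  have hPne : ∀ x, P x ≠ 0 := fun x => Complex.exp_ne_zero _
  have tP : Tendsto P l (𝓝 1) := by
    have := (Complex.continuous_exp.tendsto 0).comp tm₂0
    rw [Complex.exp_zero] at this; exact this
  have or3 : r =O[l] (fun x => x^3) := by
    have h1 := oEP.mul ((tP.inv₀ one_ne_zero).isBigO_one ℝ)
    refine h1.congr (fun x => ?_) (fun x => mul_one _)
    simp only [hr]
    field_simp [hPne x]
  have tr0 : Tendsto r l (𝓝 0) := by
    refine or3.trans_tendsto ?_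
    simpa using tx.pow 3
  have hr_half : ∀ᶠ x in l, ‖r x‖ ≤ 1/2 := by
    have := tr0.norm
    simp only [norm_zero] at this
    exact this.eventually (eventually_le_nhds (by norm_num))
  -- the final eventual identity
  have heqG : ∀ᶠ (x : ℝ) in l,
      carccos (1 - (x : ℂ) ^ 2 / (2 + I * (x:ℂ) * c)) - (x:ℂ) + (I * c / 4) * (x : ℂ) ^ 2
        = -I * Complex.log (1 + r x) := by
    filter_upwards [hxpos, hd0, hv0, hr_half, hm₂1] with x hx hdx0 hvx hrx hmx
    have hdx : (2 : ℂ) + I * x * c = d x := by simp only [hdd]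
    have hux : (x:ℂ)^2 / (2 + I * (x:ℂ) * c) = u x := by simp only [hu, hdd]
    have hud : u x * d x = (x:ℂ)^2 := by
      simp only [hu]; exact div_mul_cancel₀ _ hdx0
    have hvq : (2 - u x) / d x = 1 + q x := by simp only [hq]; ring
    have hvne : (2 - u x) / d x ≠ 0 := by rw [hvq]; exact hvx
    have hbase : (1:ℂ) - (1 - u x)^2 = (x:ℂ)^2 * ((2 - u x) / d x) := by
      rw [← mul_div_assoc, eq_div_iff hdx0]
      linear_combination (2 - u x) * hud
    have h1r : (1:ℂ) + r x ≠ 0 := by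
      intro h0
      rw [show r x = -1 by linear_combination h0] at hrx
      norm_num at hrx
    have hEPr : E x = P x * (1 + r x) := by
      simp only [hr]
      field_simp [hPne x]
      ring
    have him : |(m₂ x).im| ≤ 1 :=
      le_trans (Complex.abs_im_le_norm _) (by exact hmx)
    have hpi := Real.pi_gt_three
    have hlogP : Complex.log (P x) = m₂ x := by
      simp only [hP]
      refine Complex.log_exp ?_ ?_
      · cases' abs_le.mp him with h1 h2; linarith
      · cases' abs_le.mp him with h1 h2; linarith
    have hargP : Complex.arg (P x) = (m₂ x).im := by
      rw [← Complex.log_im, hlogP]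
    have hre : 0 < (1 + r x).re := by
      have h1 := Complex.abs_re_le_norm (r x)
      have h2 : (1 + r x).re = 1 + (r x).re := by simp
      cases' abs_le.mp h1 with h3 h4
      rw [h2]; linarith
    have hargr : |Complex.arg (1 + r x)| < Real.pi/2 :=
      Complex.abs_arg_lt_pi_div_two_iff.mpr (Or.inl hre)
    have harg : Complex.arg (P x) + Complex.arg (1 + r x) ∈ Set.Ioc (-Real.pi) Real.pi := by
      cases' abs_lt.mp hargr with ha1 ha2
      cases' abs_le.mp him with hb1 hb2
      rw [hargP]
      constructor
      · linarith
      · linarith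
    rw [hux]
    simp only [carccos]
    have e2 : (1:ℂ) - u x + I * ((x:ℂ) * ((2 - u x) / d x) ^ ((1:ℂ)/2)) = E x := by
      simp only [hE, hh]; ring
    rw [hbase, cpow_sq_mul hx hvne, e2, hEPr, Complex.log_mul (hPne x) h1r harg, hlogP]
    simp only [hm₂]
    linear_combination (-(x:ℂ) + c/4 * (x:ℂ)^2 * I) * Complex.I_sq
  -- conclude
  have obound : (fun x => -I * Complex.log (1 + r x)) =O[l] (fun x => x^3) := by
    refine IsBigO.trans ?_ or3
    refine IsBigO.of_bound 2 ?_
    filter_upwards [hr_half] with x hx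
    have h1 := log1p_bound hx
    have h2 : ‖Complex.log (1 + r x)‖ ≤ ‖r x‖ + ‖r x‖^2 := by
      calc ‖Complex.log (1 + r x)‖ ≤ ‖Complex.log (1 + r x) - r x‖ + ‖r x‖ := by
            simpa using norm_add_le (Complex.log (1 + r x) - r x) (r x)
        _ ≤ ‖r x‖ + ‖r x‖^2 := by linarith
    have h3 : ‖r x‖^2 ≤ (1/2) * ‖r x‖ := by nlinarith [norm_nonneg (r x)]
    have h4 := norm_nonneg (r x)
    rw [norm_mul]
    simp only [norm_neg, Complex.norm_I, one_mul]
    linarith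
  refine obound.congr' ?_ (by rfl)
  filter_upwards [heqG] with x hx
  rw [hA]
  exact hx.symm
end

section
/- Let τ be purely imaginary (τ = is, s ∈ ℝ, s ≠ 0) and let k, h > 0 be real. Then the quantity 1 - (kh)²/(2 + ikh(τ + τ⁻¹)) appearing in the 1D HDG dispersion relation is real, and if kh is sufficiently small it lies in [-1, 1], so the discrete wavenumber k^h = (1/h)·arccos(1 - (kh)²/(2 + ikh(τ+τ⁻¹))) is real (Im k^h = 0). -/
/-!
For `τ = is` one has `τ + τ⁻¹ = i(s - s⁻¹)`, so the denominator `2 + ikh(τ + τ⁻¹)` equals the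
real number `2 - kh(s - s⁻¹)` and the arccosine argument `1 - (kh)²/(2 - kh(s - s⁻¹))` is real.
For small `kh` the denominator exceeds `1 > (kh)²`, which puts the argument in `[-1, 1]`. For real
`z ∈ [-1, 1]` the point `z + i√(1 - z²)` lies on the unit circle, so its logarithm is purely
imaginary and `arccos z = -i log(z + i√(1 - z²))` is real.
-/

open Complex

theorem carccos_ofReal_im_eq_zero {z : ℝ} (hz : z ∈ Set.Icc (-1 : ℝ) 1) :
    (carccos z).im = 0 := by
  have hnonneg : 0 ≤ 1 - z ^ 2 := by nlinarith [hz.1, hz.2]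
  have hroot : ((1 : ℂ) - (z : ℂ) ^ 2) ^ ((1 : ℂ) / 2) = (√(1 - z ^ 2) : ℝ) := by
    rw [Real.sqrt_eq_rpow, ofReal_cpow hnonneg]
    push_cast
    ring_nf
  have hnorm : ‖(z : ℂ) + I * (√(1 - z ^ 2) : ℝ)‖ = 1 := by
    rw [mul_comm, norm_add_mul_I, Real.sq_sqrt hnonneg]
    simp
  rw [carccos, hroot]
  simp [log_re, hnorm]

theorem I_mul_ofReal_add_inv (s : ℝ) : I * s + (I * s)⁻¹ = I * (s - s⁻¹ : ℝ) := by
  rw [mul_inv, inv_I]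
  push_cast
  ring

theorem hdg_dispersion_arg_eq_ofReal (x s : ℝ) :
    1 - (x : ℂ) ^ 2 / (2 + I * x * (I * s + (I * s)⁻¹))
      = (1 - x ^ 2 / (2 - x * (s - s⁻¹)) : ℝ) := by
  rw [I_mul_ofReal_add_inv]
  push_cast
  ring_nf
  rw [I_sq]
  ring_nf

theorem one_sub_sq_div_mem_Icc {x c : ℝ} (hx : 0 ≤ x) (hxc : x * (1 + |c|) < 1) :
    1 - x ^ 2 / (2 - x * c) ∈ Set.Icc (-1 : ℝ) 1 := by
  have hxc' : x * c ≤ x * |c| := mul_le_mul_of_nonneg_left (le_abs_self c) hx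
  have hden : 1 < 2 - x * c := by nlinarith
  have hx1 : x < 1 := by nlinarith [abs_nonneg c]
  have hsq : x ^ 2 < 2 - x * c := by nlinarith
  have hquot : x ^ 2 / (2 - x * c) < 1 := (div_lt_one (by linarith)).mpr hsq
  have hquot_nonneg : 0 ≤ x ^ 2 / (2 - x * c) := div_nonneg (sq_nonneg x) (by linarith)
  constructor <;> linarith

theorem hdg_1d_no_dissipation_imaginary_tau_general (s : ℝ) (k h : ℝ) :
    (1 - ((k * h : ℂ)) ^ 2 / (2 + I * (k * h) * ((I * s) + (I * s)⁻¹))).im = 0 ∧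
    ∃ δ > 0, ∀ x : ℝ, 0 < x → x < δ →
      (1 - ((x : ℂ)) ^ 2 / (2 + I * x * ((I * s) + (I * s)⁻¹))).re ∈ Set.Icc (-1 : ℝ) 1 ∧
      ((1 / (h : ℂ)) * carccos (1 - ((x : ℂ)) ^ 2 / (2 + I * x * ((I * s) + (I * s)⁻¹)))).im
        = 0 := by
  refine ⟨?_, 1 / (1 + |s - s⁻¹|), by positivity, fun x hx hxδ => ?_⟩
  · rw [← ofReal_mul, hdg_dispersion_arg_eq_ofReal, ofReal_im]
  have hmem := one_sub_sq_div_mem_Icc hx.le ((lt_div_iff₀ (by positivity)).mp hxδ)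
  rw [hdg_dispersion_arg_eq_ofReal, ofReal_re, one_div, ← ofReal_inv, im_ofReal_mul,
    carccos_ofReal_im_eq_zero hmem, mul_zero]
  exact ⟨hmem, rfl⟩

/-- For purely imaginary `τ = is` (`s ≠ 0`) and real `k, h > 0`, the argument
`1 - (kh)²/(2 + ikh(τ + τ⁻¹))` of the arccosine in the 1D HDG dispersion relation is
real; and for `kh` sufficiently small it lies in `[-1, 1]`, so that the discrete
wavenumber `k^h = (1/h)·arccos(...)` is real (no artificial dissipation). -/
theorem hdg_1d_no_dissipation_imaginary_tau (s : ℝ) (hs : s ≠ 0) (k h : ℝ)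
    (hk : 0 < k) (hh : 0 < h) :
    (1 - ((k * h : ℂ)) ^ 2 / (2 + I * (k * h) * ((I * s) + (I * s)⁻¹))).im = 0 ∧
    ∃ δ > 0, ∀ x : ℝ, 0 < x → x < δ →
      (1 - ((x : ℂ)) ^ 2 / (2 + I * x * ((I * s) + (I * s)⁻¹))).re ∈ Set.Icc (-1 : ℝ) 1 ∧
      ((1 / (h : ℂ)) * carccos (1 - ((x : ℂ)) ^ 2 / (2 + I * x * ((I * s) + (I * s)⁻¹)))).im
        = 0 :=
  hdg_1d_no_dissipation_imaginary_tau_general s k h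
end

section
/- Define for small x > 0 the function Kⱼ(x) = 2 arccos(√((12 - xⱼ²)/(2xⱼ² + 12))) with x₁ = x cos θ, x₂ = x sin θ, and K(x) = √(K₁(x)² + K₂(x)²). Then K(x) - x = -((cos 4θ + 3)/96)·x³ + O(x⁵) as x → 0⁺. -/
/-!
With `u = K(t)/2` the defining formula gives exactly `sin² u = 3t²/(2t² + 12)`. Inverting the
sine through `u² = sin² u + sin⁴ u / 3 + O(u⁶)` (the start of the series of `arcsin²`) yields
`K(t)² = t² - t⁴/12 + O(t⁶)`, the rational remainder being exactly `t⁸/(12(t² + 6)²)`. Adding the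
two directions `t = x cos θ`, `t = x sin θ` gives `K₁² + K₂² = x² - (cos⁴θ + sin⁴θ) x⁴/12 + O(x⁶)`,
and a square root turns this into `x - β x³ + O(x⁵)` with `β = (cos⁴θ + sin⁴θ)/24 = (cos 4θ + 3)/96`.
-/

open Filter Topology Asymptotics Real

theorem Real.abs_sq_sub_sin_sq_sub_sin_pow_four_le {x : ℝ} (hx : |x| ≤ 1) :
    |x ^ 2 - (sin x ^ 2 + sin x ^ 4 / 3)| ≤ x ^ 6 / 4 := by
  set a := x - x ^ 3 / 6
  have hx2 : x ^ 2 ≤ 1 := by nlinarith [sq_abs x, abs_nonneg x]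
  have ha : |a| ≤ |x| := by
    rw [show a = x * (1 - x ^ 2 / 6) by ring, abs_mul]
    exact mul_le_of_le_one_right (abs_nonneg x) (abs_le.2 ⟨by nlinarith, by nlinarith⟩)
  have hsa : |sin x ^ 2 - a ^ 2| ≤ x ^ 6 / 50 := by
    have h5 : |sin x - a| ≤ |x| ^ 5 / 100 := sin_bound hx
    have h1 : |sin x + a| ≤ 2 * |x| :=
      (abs_add_le _ _).trans (by linarith [abs_sin_le_abs (x := x)])
    calc |sin x ^ 2 - a ^ 2| = |sin x + a| * |sin x - a| := by rw [sq_sub_sq, abs_mul]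
      _ ≤ (2 * |x|) * (|x| ^ 5 / 100) := by gcongr
      _ = x ^ 6 / 50 := by rw [← Even.pow_abs ⟨3, rfl⟩ x]; ring
  have hsum : sin x ^ 2 + a ^ 2 ≤ 2 := by
    nlinarith [sin_sq_le_one x, sq_abs a, sq_abs x, abs_nonneg a]
  have hdecomp : x ^ 2 - (sin x ^ 2 + sin x ^ 4 / 3) =
      x ^ 6 * (7 / 36 - x ^ 2 / 18 + x ^ 4 / 162 - x ^ 6 / 3888)
        - (sin x ^ 2 - a ^ 2) * (1 + (sin x ^ 2 + a ^ 2) / 3) := by ring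
  have hpoly : |x ^ 6 * (7 / 36 - x ^ 2 / 18 + x ^ 4 / 162 - x ^ 6 / 3888)| ≤
      x ^ 6 * (7 / 36) := by
    rw [abs_mul, abs_of_nonneg (by positivity)]
    gcongr
    rw [abs_le]
    constructor <;> nlinarith [sq_nonneg x, pow_nonneg (sq_nonneg x) 2, pow_nonneg (sq_nonneg x) 3]
  have herr : |(sin x ^ 2 - a ^ 2) * (1 + (sin x ^ 2 + a ^ 2) / 3)| ≤ x ^ 6 / 50 * (5 / 3) := by
    have h0 : 0 ≤ 1 + (sin x ^ 2 + a ^ 2) / 3 := by nlinarith [sq_nonneg (sin x), sq_nonneg a]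
    rw [abs_mul, abs_of_nonneg h0]
    exact mul_le_mul hsa (by linarith) h0 (by positivity)
  rw [hdecomp]
  calc _ ≤ _ := abs_sub _ _
    _ ≤ x ^ 6 * (7 / 36) + x ^ 6 / 50 * (5 / 3) := add_le_add hpoly herr
    _ ≤ x ^ 6 / 4 := by nlinarith [pow_two_nonneg (x ^ 3)]

theorem Real.cos_four_mul_add_three (θ : ℝ) :
    cos (4 * θ) + 3 = 4 * (cos θ ^ 4 + sin θ ^ 4) := by
  rw [show 4 * θ = 2 * (2 * θ) by ring, cos_two_mul, cos_two_mul]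
  linear_combination (-4 * (1 - cos θ ^ 2 + sin θ ^ 2)) * sin_sq_add_cos_sq θ

theorem Real.abs_sqrt_sub_mul_le {a b : ℝ} (hb : 0 ≤ b) : |√a - b| * b ≤ |a - b ^ 2| := by
  rcases le_or_gt 0 a with ha | ha
  · have hsum : 0 ≤ √a + b := add_nonneg (sqrt_nonneg a) hb
    calc |√a - b| * b ≤ |√a - b| * |√a + b| := by
          rw [abs_of_nonneg hsum]; gcongr; exact le_add_of_nonneg_left (sqrt_nonneg a)
      _ = |a - b ^ 2| := by rw [← abs_mul]; congr 1; linear_combination sq_sqrt ha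
  · rw [sqrt_eq_zero_of_nonpos ha.le, zero_sub, abs_neg, abs_of_nonneg hb,
      abs_of_neg (by nlinarith)]
    nlinarith

theorem isBigO_sqrt_sub_of_isBigO {S : ℝ → ℝ} {β : ℝ}
    (hS : (fun x => S x - (x ^ 2 - 2 * β * x ^ 4)) =O[𝓝[>] 0] fun x => x ^ 6) :
    (fun x => √(S x) - x + β * x ^ 3) =O[𝓝[>] 0] fun x => x ^ 5 := by
  set P : ℝ → ℝ := fun x => x - β * x ^ 3
  have hP : (fun x => S x - P x ^ 2) =O[𝓝[>] 0] fun x => x ^ 6 :=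
    (hS.sub ((isBigO_refl _ _).const_mul_left (β ^ 2))).congr_left fun x => by ring
  obtain ⟨C, hC⟩ := hP.bound
  have hβ : ∀ᶠ x in 𝓝[>] (0 : ℝ), β * x ^ 2 < 1 / 2 := by
    have h : Tendsto (fun x : ℝ => β * x ^ 2) (𝓝 0) (𝓝 0) :=
      (by fun_prop : Continuous fun x : ℝ => β * x ^ 2).tendsto' 0 0 (by simp)
    exact nhdsWithin_le_nhds (h.eventually (gt_mem_nhds (by norm_num)))
  refine IsBigO.of_bound (2 * C) ?_
  filter_upwards [hC, hβ, self_mem_nhdsWithin] with x hCx hβx (hx : 0 < x)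
  have hPx : x / 2 ≤ P x := by simp only [P]; nlinarith
  rw [norm_eq_abs, norm_eq_abs, abs_of_pos (pow_pos hx 6)] at hCx
  rw [norm_eq_abs, norm_eq_abs, abs_of_pos (pow_pos hx 5),
    show √(S x) - x + β * x ^ 3 = √(S x) - P x by ring]
  have : |√(S x) - P x| * (x / 2) ≤ 2 * C * x ^ 5 * (x / 2) :=
    calc |√(S x) - P x| * (x / 2) ≤ |√(S x) - P x| * P x := by gcongr
      _ ≤ |S x - P x ^ 2| := Real.abs_sqrt_sub_mul_le (by linarith)
      _ ≤ C * x ^ 6 := hCx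
      _ = 2 * C * x ^ 5 * (x / 2) := by ring
  exact le_of_mul_le_mul_right this (by positivity)

/-- The discrete wavenumber `h kʰⱼ` of the HRT method as a function of `t = h kⱼ`. -/
noncomputable def hrtWavenumber (t : ℝ) : ℝ := 2 * arccos √((12 - t ^ 2) / (2 * t ^ 2 + 12))

theorem hrtWavenumber_nonneg (t : ℝ) : 0 ≤ hrtWavenumber t :=
  mul_nonneg zero_le_two (arccos_nonneg _)

theorem sin_sq_hrtWavenumber_div_two {t : ℝ} (ht : t ^ 2 ≤ 12) :
    sin (hrtWavenumber t / 2) ^ 2 = 3 * t ^ 2 / (2 * t ^ 2 + 12) := by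
  have hd : 0 < 2 * t ^ 2 + 12 := by positivity
  have hw : 0 ≤ (12 - t ^ 2) / (2 * t ^ 2 + 12) := div_nonneg (by linarith) hd.le
  have hw1 : (12 - t ^ 2) / (2 * t ^ 2 + 12) ≤ 1 :=
    (div_le_one hd).2 (by nlinarith [sq_nonneg t])
  rw [hrtWavenumber, mul_div_cancel_left₀ _ two_ne_zero, sin_arccos, sq_sqrt hw,
    sq_sqrt (by linarith)]
  field_simp
  ring

theorem hrtWavenumber_le_two_mul_abs {t : ℝ} (ht : t ^ 2 ≤ 12) : hrtWavenumber t ≤ 2 * |t| := by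
  set u := hrtWavenumber t / 2 with hu_def
  have hu0 : 0 ≤ u := by have := hrtWavenumber_nonneg t; positivity
  have hu1 : u ≤ π / 2 := by
    simp only [u, hrtWavenumber, mul_div_cancel_left₀ _ (two_ne_zero' ℝ)]
    exact arccos_le_pi_div_two.2 (sqrt_nonneg _)
  have hsin : sin u ≤ |t| / 2 := by
    have h : sin u ^ 2 ≤ (|t| / 2) ^ 2 := by
      rw [sin_sq_hrtWavenumber_div_two ht, div_pow, sq_abs,
        div_le_div_iff₀ (by positivity) (by norm_num)]
      nlinarith [sq_nonneg t, sq_nonneg (t ^ 2)]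
    exact abs_le_of_sq_le_sq' h (by positivity) |>.2
  have hjordan := mul_le_sin hu0 hu1
  have hπ : 0 < π := pi_pos
  have hut : u ≤ |t| := by
    rw [div_mul_eq_mul_div, div_le_iff₀ hπ] at hjordan
    nlinarith [pi_lt_four, abs_nonneg t]
  linarith [hu_def, hut]

theorem abs_hrtWavenumber_sq_sub_le {t : ℝ} (ht : |t| ≤ 1) :
    |hrtWavenumber t ^ 2 - (t ^ 2 - t ^ 4 / 12)| ≤ 2 * t ^ 6 := by
  have ht2 : t ^ 2 ≤ 1 := by nlinarith [sq_abs t, abs_nonneg t]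
  set u := hrtWavenumber t / 2 with hu_def
  have hu : |u| ≤ |t| := by
    rw [abs_of_nonneg (by have := hrtWavenumber_nonneg t; positivity)]
    linarith [hrtWavenumber_le_two_mul_abs (t := t) (by linarith)]
  have hu6 : u ^ 6 ≤ t ^ 6 := by
    rw [← Even.pow_abs ⟨3, rfl⟩ u, ← Even.pow_abs ⟨3, rfl⟩ t]
    exact pow_le_pow_left₀ (abs_nonneg u) hu 6
  have hinv := Real.abs_sq_sub_sin_sq_sub_sin_pow_four_le (hu.trans ht)
  rw [show sin u ^ 4 = (sin u ^ 2) ^ 2 by ring, sin_sq_hrtWavenumber_div_two (by linarith)] at hinv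
  set r := 3 * t ^ 2 / (2 * t ^ 2 + 12) with hr
  have hdecomp : hrtWavenumber t ^ 2 - (t ^ 2 - t ^ 4 / 12) =
      4 * (u ^ 2 - (r + r ^ 2 / 3)) + t ^ 8 / (12 * (t ^ 2 + 6) ^ 2) := by
    rw [hu_def, hr]; field_simp; ring
  have hrem : |t ^ 8 / (12 * (t ^ 2 + 6) ^ 2)| ≤ t ^ 6 := by
    rw [abs_of_nonneg (by positivity)]
    calc t ^ 8 / (12 * (t ^ 2 + 6) ^ 2) ≤ t ^ 8 := div_le_self (by positivity) (by nlinarith)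
      _ = t ^ 6 * t ^ 2 := by ring
      _ ≤ t ^ 6 := mul_le_of_le_one_right (by positivity) ht2
  rw [hdecomp]
  calc _ ≤ |4 * (u ^ 2 - (r + r ^ 2 / 3))| + |t ^ 8 / (12 * (t ^ 2 + 6) ^ 2)| := abs_add_le _ _
    _ ≤ 4 * (u ^ 6 / 4) + t ^ 6 := by
      rw [abs_mul, abs_of_pos four_pos]; exact add_le_add (by gcongr) hrem
    _ ≤ 2 * t ^ 6 := by linarith

theorem hrtWavenumber_sq_sub_isBigO :
    (fun t => hrtWavenumber t ^ 2 - (t ^ 2 - t ^ 4 / 12)) =O[𝓝 0] fun t => t ^ 6 := by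
  refine IsBigO.of_bound 2 ?_
  filter_upwards [Metric.closedBall_mem_nhds (0 : ℝ) one_pos] with t ht
  rw [norm_eq_abs, norm_eq_abs, abs_of_nonneg (by positivity : (0 : ℝ) ≤ t ^ 6)]
  exact abs_hrtWavenumber_sq_sub_le (by simpa using ht)

theorem hrtWavenumber_mul_sq_sub_isBigO (a : ℝ) :
    (fun x => hrtWavenumber (x * a) ^ 2 - (a ^ 2 * x ^ 2 - a ^ 4 / 12 * x ^ 4)) =O[𝓝 0]
      fun x => x ^ 6 := by
  have h := hrtWavenumber_sq_sub_isBigO.comp_tendsto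
    ((continuous_mul_const a).tendsto' 0 0 (zero_mul a))
  refine (h.trans ?_).congr_left fun x => by simp only [Function.comp_apply]; ring
  exact ((isBigO_refl (fun x : ℝ => x ^ 6) _).const_mul_left (a ^ 6)).congr_left fun x => by
    simp only [Function.comp_apply]; ring

/-- Asymptotic expansion of the lowest-order HRT discrete wavenumber:
`K(x) - x = -((cos 4θ + 3)/96)·x³ + O(x⁵)` as `x = kh → 0⁺`, where
`K(x) = √(K₁(x)² + K₂(x)²)` and `Kⱼ(x) = 2 arccos √((12 - xⱼ²)/(2xⱼ² + 12))` with
`x₁ = x cos θ`, `x₂ = x sin θ`. -/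
theorem hrt_dispersion_asymptotics (θ : ℝ) :
    (fun x : ℝ =>
        Real.sqrt
            ((2 * Real.arccos (Real.sqrt
                ((12 - (x * Real.cos θ) ^ 2) / (2 * (x * Real.cos θ) ^ 2 + 12)))) ^ 2
              + (2 * Real.arccos (Real.sqrt
                ((12 - (x * Real.sin θ) ^ 2) / (2 * (x * Real.sin θ) ^ 2 + 12)))) ^ 2)
          - x + ((Real.cos (4 * θ) + 3) / 96) * x ^ 3)
      =O[𝓝[>] (0 : ℝ)] fun x : ℝ => x ^ 5 := by
  have hS : (fun x => hrtWavenumber (x * cos θ) ^ 2 + hrtWavenumber (x * sin θ) ^ 2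
      - (x ^ 2 - 2 * ((cos (4 * θ) + 3) / 96) * x ^ 4)) =O[𝓝[>] 0] fun x => x ^ 6 :=
    (((hrtWavenumber_mul_sq_sub_isBigO (cos θ)).add
      (hrtWavenumber_mul_sq_sub_isBigO (sin θ))).mono nhdsWithin_le_nhds).congr_left fun x => by
        linear_combination (-x ^ 2) * sin_sq_add_cos_sq θ
          - x ^ 4 / 48 * Real.cos_four_mul_add_three θ
  exact isBigO_sqrt_sub_of_isBigO hS
end
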